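/- Minimax equals maximin for expected relative entropy (finite case): with Θ, Y finite, min_Q max_π Σ_θ π(θ) D(P_θ‖Q) = max_π min_Q Σ_θ π(θ) D(P_θ‖Q) = max_π I_π(θ;Y), and the minimax Q is the mixture under the capacity-attaining prior. -/

import Mathlib

open scoped ENNReal BigOperators

/-- Relative entropy between finitely supported distributions, valued in `ℝ≥0∞`
(`⊤` when absolute continuity fails). -/
noncomputable def finKL {Y : Type*} [Fintype Y] (p q : Y → ℝ) : ℝ≥0∞ :=
  if ∀ y, q y = 0 → p y = 0 then
    ENNReal.ofReal (∑ y, p y * Real.log (p y / q y))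
  else ⊤

/-!
The mixture `P̄_π` is a best response to the prior `π`: by the compensation identity
`∑ π(θ) D(P_θ‖Q) = I_π + D(P̄_π‖Q)` and Gibbs' inequality, `min_Q` of the expected
divergence is `I_π`, so maximin is capacity. A capacity-achieving prior `π*` exists by
compactness of the simplex and continuity of `I_π = H(P̄_π) - ∑ π(θ) H(P_θ)`. Moving `π*`
towards a point mass `δ_θ` cannot increase `I`, which forces `D(P_θ‖P̄_{π*}) ≤ I_{π*}` for
every `θ` (letting the step size tend to `0`); hence `P̄_{π*}` guarantees `I_{π*}` against
every prior, and minimax is at most maximin.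
-/

open Finset Filter Topology

theorem iInf_iSup_eq_iSup_iInf_of_bestResponse {α β γ : Type*} [CompleteLattice γ]
    (f : α → β → γ) (g : α → β) (hg : ∀ a b, f a (g a) ≤ f a b)
    (hmax : ∃ a₀, ∀ a, f a (g a) ≤ f a₀ (g a₀))
    (hsaddle : ∀ a₀, (∀ a, f a (g a) ≤ f a₀ (g a₀)) → ∀ a, f a (g a₀) ≤ f a₀ (g a₀)) :
    (⨅ b, ⨆ a, f a b) = (⨆ a, ⨅ b, f a b) ∧
      (⨆ a, ⨅ b, f a b) = (⨆ a, f a (g a)) ∧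
      ∀ a₀, f a₀ (g a₀) = (⨆ a, f a (g a)) → (⨆ a, f a (g a₀)) = ⨅ b, ⨆ a, f a b := by
  have hmaximin : (⨆ a, ⨅ b, f a b) = ⨆ a, f a (g a) :=
    iSup_congr fun a => le_antisymm (iInf_le _ _) (le_iInf (hg a))
  have hupper : ∀ a₀, f a₀ (g a₀) = (⨆ a, f a (g a)) → (⨆ a, f a (g a₀)) ≤ ⨆ a, f a (g a) :=
    fun a₀ h => iSup_le fun a =>
      (hsaddle a₀ (fun a' => h ▸ le_iSup (fun a => f a (g a)) a') a).trans h.le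
  obtain ⟨a₀, ha₀⟩ := hmax
  have hminimax : (⨅ b, ⨆ a, f a b) = ⨆ a, ⨅ b, f a b :=
    le_antisymm ((iInf_le _ (g a₀)).trans (hmaximin ▸ hupper a₀
      (le_antisymm (le_iSup (fun a => f a (g a)) a₀) (iSup_le ha₀))))
      (iSup_iInf_le_iInf_iSup f)
  refine ⟨hminimax, hmaximin, fun a h => le_antisymm ?_ (iInf_le _ _)⟩
  rw [hminimax, hmaximin]
  exact hupper a h

section RelEntropy

variable {Θ Y : Type*} [Fintype Θ] {P : Θ → Y → ℝ} {π : Θ → ℝ}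

noncomputable def mixture (P : Θ → Y → ℝ) (π : Θ → ℝ) : Y → ℝ :=
  fun y => ∑ θ, π θ * P θ y

lemma eq_zero_of_mixture_eq_zero (hP : ∀ θ y, 0 ≤ P θ y) (hπ : ∀ θ, 0 ≤ π θ) {θ : Θ}
    (hθ : π θ ≠ 0) {y : Y} (hy : mixture P π y = 0) : P θ y = 0 := by
  have := (sum_eq_zero_iff_of_nonneg fun θ _ => mul_nonneg (hπ θ) (hP θ y)).mp hy θ (mem_univ θ)
  exact (mul_eq_zero.mp this).resolve_left hθ

lemma continuous_mixture : Continuous (mixture P) :=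
  continuous_pi fun _ => continuous_finsetSum _ fun θ _ => (continuous_apply θ).mul continuous_const

lemma mixture_perturb_apply [DecidableEq Θ] (θ₀ : Θ) (t : ℝ) (y : Y) :
    mixture P ((1 - t) • π + t • Pi.single θ₀ 1) y = (1 - t) * mixture P π y + t * P θ₀ y := by
  simp [mixture, add_mul, sum_add_distrib, mul_sum, Pi.single_apply, mul_assoc]

variable [Fintype Y]

lemma mixture_mem_stdSimplex (hP : ∀ θ, P θ ∈ stdSimplex ℝ Y) (hπ : π ∈ stdSimplex ℝ Θ) :
    mixture P π ∈ stdSimplex ℝ Y := by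
  refine ⟨fun y => sum_nonneg fun θ _ => mul_nonneg (hπ.1 θ) ((hP θ).1 y), ?_⟩
  simp only [mixture]
  rw [sum_comm]
  simp [← mul_sum, (hP _).2, hπ.2]

lemma sum_mul_sum_mul_eq_sum_mixture_mul (f : Y → ℝ) :
    ∑ θ, π θ * ∑ y, P θ y * f y = ∑ y, mixture P π y * f y := by
  simp only [mixture, mul_sum, sum_mul, mul_assoc]
  exact sum_comm

/-- Only meaningful when `q y = 0 → p y = 0`; otherwise `log (p y / 0) = 0` gives junk. -/
noncomputable def relEntropy (p q : Y → ℝ) : ℝ :=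
  ∑ y, p y * Real.log (p y / q y)

noncomputable def mutualInfo (P : Θ → Y → ℝ) (π : Θ → ℝ) : ℝ :=
  ∑ θ, π θ * relEntropy (P θ) (mixture P π)

lemma sub_le_mul_log_div {a b : ℝ} (ha : 0 ≤ a) (hb : 0 ≤ b) (hab : b = 0 → a = 0) :
    a - b ≤ a * Real.log (a / b) := by
  rcases ha.eq_or_lt with rfl | ha
  · simpa using hb
  have hb : 0 < b := hb.lt_of_ne fun h => ha.ne' (hab h.symm)
  calc a - b = a * (1 - (a / b)⁻¹) := by field_simp
    _ ≤ a * Real.log (a / b) :=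
      mul_le_mul_of_nonneg_left (Real.one_sub_inv_le_log_of_pos (div_pos ha hb)) ha.le

lemma relEntropy_nonneg {p q : Y → ℝ} (hp : p ∈ stdSimplex ℝ Y) (hq : q ∈ stdSimplex ℝ Y)
    (hpq : ∀ y, q y = 0 → p y = 0) : 0 ≤ relEntropy p q :=
  calc 0 = ∑ y, (p y - q y) := by rw [sum_sub_distrib, hp.2, hq.2, sub_self]
    _ ≤ relEntropy p q := sum_le_sum fun y _ => sub_le_mul_log_div (hp.1 y) (hq.1 y) (hpq y)

lemma sub_one_le_relEntropy {p q : Y → ℝ} (hp : ∀ y, 0 ≤ p y) (hq : q ∈ stdSimplex ℝ Y)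
    (hpq : ∀ y, q y = 0 → p y = 0) (y₀ : Y) :
    p y₀ * Real.log (p y₀ / q y₀) - 1 ≤ relEntropy p q := by
  classical
  have hrest : -1 ≤ ∑ y ∈ univ.erase y₀, p y * Real.log (p y / q y) :=
    calc -1 = -∑ y, q y := by rw [hq.2]
      _ ≤ -∑ y ∈ univ.erase y₀, q y :=
        neg_le_neg (sum_le_sum_of_subset_of_nonneg (erase_subset _ _) fun y _ _ => hq.1 y)
      _ = ∑ y ∈ univ.erase y₀, -q y := (sum_neg_distrib ..).symm
      _ ≤ _ := sum_le_sum fun y _ => by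
        linarith [sub_le_mul_log_div (hp y) (hq.1 y) (hpq y), hp y]
  rw [relEntropy, ← add_sum_erase _ _ (mem_univ y₀)]
  linarith

lemma relEntropy_eq_sub {p q : Y → ℝ} (hpq : ∀ y, q y = 0 → p y = 0) :
    relEntropy p q = ∑ y, p y * Real.log (p y) - ∑ y, p y * Real.log (q y) := by
  rw [relEntropy, ← sum_sub_distrib]
  refine sum_congr rfl fun y _ => ?_
  by_cases hp : p y = 0
  · simp [hp]
  · rw [Real.log_div hp (mt (hpq y) hp)]
    ring

lemma continuousAt_relEntropy {p q : Y → ℝ} (hpq : ∀ y, q y = 0 → p y = 0) :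
    ContinuousAt (relEntropy p) q := by
  refine tendsto_finsetSum _ fun y _ => ?_
  by_cases hp : p y = 0
  · simp [hp]
  · have hq : q y ≠ 0 := mt (hpq y) hp
    exact continuousAt_const.mul
      ((continuousAt_const.div (continuous_apply y).continuousAt hq).log (div_ne_zero hp hq))

lemma sum_mul_relEntropy_eq {q : Y → ℝ} (hq : ∀ θ, π θ ≠ 0 → ∀ y, q y = 0 → P θ y = 0) :
    ∑ θ, π θ * relEntropy (P θ) q =
      ∑ θ, π θ * ∑ y, P θ y * Real.log (P θ y) - ∑ y, mixture P π y * Real.log (q y) := by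
  rw [← sum_mul_sum_mul_eq_sum_mixture_mul, ← sum_sub_distrib]
  refine sum_congr rfl fun θ _ => ?_
  by_cases hθ : π θ = 0
  · simp [hθ]
  · rw [relEntropy_eq_sub (hq θ hθ), mul_sub]

lemma mutualInfo_eq_sub (hP : ∀ θ y, 0 ≤ P θ y) (hπ : ∀ θ, 0 ≤ π θ) :
    mutualInfo P π =
      ∑ θ, π θ * ∑ y, P θ y * Real.log (P θ y) -
        ∑ y, mixture P π y * Real.log (mixture P π y) :=
  sum_mul_relEntropy_eq fun _ hθ _ hy => eq_zero_of_mixture_eq_zero hP hπ hθ hy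

lemma sum_mul_relEntropy_eq_mutualInfo_add {q : Y → ℝ} (hP : ∀ θ y, 0 ≤ P θ y)
    (hπ : ∀ θ, 0 ≤ π θ) (hq : ∀ y, q y = 0 → mixture P π y = 0) :
    ∑ θ, π θ * relEntropy (P θ) q = mutualInfo P π + relEntropy (mixture P π) q := by
  rw [sum_mul_relEntropy_eq fun _ hθ y hy => eq_zero_of_mixture_eq_zero hP hπ hθ (hq y hy),
    mutualInfo_eq_sub hP hπ, relEntropy_eq_sub hq]
  ring

lemma mutualInfo_le_sum_mul_relEntropy {q : Y → ℝ} (hP : ∀ θ, P θ ∈ stdSimplex ℝ Y)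
    (hπ : π ∈ stdSimplex ℝ Θ) (hq : q ∈ stdSimplex ℝ Y)
    (hqm : ∀ y, q y = 0 → mixture P π y = 0) :
    mutualInfo P π ≤ ∑ θ, π θ * relEntropy (P θ) q := by
  rw [sum_mul_relEntropy_eq_mutualInfo_add (fun θ => (hP θ).1) hπ.1 hqm]
  linarith [relEntropy_nonneg (mixture_mem_stdSimplex hP hπ) hq hqm]

lemma mutualInfo_nonneg (hP : ∀ θ, P θ ∈ stdSimplex ℝ Y) (hπ : π ∈ stdSimplex ℝ Θ) :
    0 ≤ mutualInfo P π := by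
  refine sum_nonneg fun θ _ => ?_
  by_cases hθ : π θ = 0
  · simp [hθ]
  · exact mul_nonneg (hπ.1 θ) (relEntropy_nonneg (hP θ) (mixture_mem_stdSimplex hP hπ)
      fun _ hy => eq_zero_of_mixture_eq_zero (fun θ => (hP θ).1) hπ.1 hθ hy)

lemma continuousOn_mutualInfo (hP : ∀ θ y, 0 ≤ P θ y) :
    ContinuousOn (mutualInfo P) (stdSimplex ℝ Θ) := by
  refine ContinuousOn.congr (Continuous.continuousOn ?_) fun π hπ => mutualInfo_eq_sub hP hπ.1
  exact (continuous_finsetSum _ fun θ _ => (continuous_apply θ).mul continuous_const).sub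
    (continuous_finsetSum _ fun y _ =>
      Real.continuous_mul_log.comp ((continuous_apply y).comp continuous_mixture))

lemma exists_isMaxOn_mutualInfo [Nonempty Θ] (hP : ∀ θ y, 0 ≤ P θ y) :
    ∃ π ∈ stdSimplex ℝ Θ, IsMaxOn (mutualInfo P) (stdSimplex ℝ Θ) π := by
  classical
  exact (isCompact_stdSimplex ℝ Θ).exists_isMaxOn
    ⟨_, single_mem_stdSimplex ℝ (Classical.arbitrary Θ)⟩ (continuousOn_mutualInfo hP)

section IsMaxOn

variable (hP : ∀ θ, P θ ∈ stdSimplex ℝ Y) (hπ : π ∈ stdSimplex ℝ Θ)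
  (hmax : IsMaxOn (mutualInfo P) (stdSimplex ℝ Θ) π)
include hP hπ hmax

/-- `I` at the perturbed prior is `(1 - t) ∑ π(θ) D(P_θ‖m) + t D(P_θ₀‖m)` with `m` its mixture,
and the first sum is at least `I_π`. -/
lemma relEntropy_mixture_perturb_le [DecidableEq Θ] (θ₀ : Θ) {t : ℝ} (ht : t ∈ Set.Ioo 0 1) :
    relEntropy (P θ₀) (mixture P ((1 - t) • π + t • Pi.single θ₀ 1)) ≤ mutualInfo P π := by
  set π' := (1 - t) • π + t • Pi.single θ₀ 1
  have hπ' : π' ∈ stdSimplex ℝ Θ :=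
    convex_stdSimplex ℝ Θ hπ (single_mem_stdSimplex ℝ θ₀) (by linarith [ht.2]) ht.1.le (by ring)
  have hac : ∀ y, mixture P π' y = 0 → mixture P π y = 0 := fun y hy => by
    rw [mixture_perturb_apply] at hy
    have := mul_nonneg ht.1.le ((hP θ₀).1 y)
    have := (mixture_mem_stdSimplex hP hπ).1 y
    nlinarith [ht.2]
  have hsplit : mutualInfo P π' = (1 - t) * ∑ θ, π θ * relEntropy (P θ) (mixture P π') +
      t * relEntropy (P θ₀) (mixture P π') := by
    simp [π', mutualInfo, add_mul, sum_add_distrib, mul_sum, Pi.single_apply, mul_assoc]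
  have hlow := mutualInfo_le_sum_mul_relEntropy hP hπ (mixture_mem_stdSimplex hP hπ') hac
  have hle : mutualInfo P π' ≤ mutualInfo P π := hmax hπ'
  nlinarith [ht.1, ht.2]

/-- Otherwise `D(P_θ₀‖m_t) ≥ -P_θ₀(y₀) log t - 1` would blow up as `t → 0`. -/
lemma eq_zero_of_mixture_eq_zero_of_isMaxOn (θ₀ : Θ) {y₀ : Y} (hy₀ : mixture P π y₀ = 0) :
    P θ₀ y₀ = 0 := by
  classical
  by_contra hne
  have hc : 0 < P θ₀ y₀ := ((hP θ₀).1 y₀).lt_of_ne' hne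
  obtain ⟨t, ht, hlog⟩ := (Filter.Eventually.and (Ioo_mem_nhdsGT one_pos)
    ((Real.tendsto_log_nhdsGT_zero.const_mul_atBot hc).eventually_lt_atBot
      (-(mutualInfo P π + 1)))).exists
  have hac : ∀ y, mixture P ((1 - t) • π + t • Pi.single θ₀ 1) y = 0 → P θ₀ y = 0 :=
    fun y hy => by
    rw [mixture_perturb_apply] at hy
    have := mul_nonneg (sub_nonneg.mpr ht.2.le) ((mixture_mem_stdSimplex hP hπ).1 y)
    have := mul_nonneg ht.1.le ((hP θ₀).1 y)
    exact (mul_eq_zero.mp (by linarith : t * P θ₀ y = 0)).resolve_left ht.1.ne'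
  have hlower := sub_one_le_relEntropy (hP θ₀).1
    (mixture_mem_stdSimplex hP (convex_stdSimplex ℝ Θ hπ (single_mem_stdSimplex ℝ θ₀)
      (by linarith [ht.2]) ht.1.le (by ring))) hac y₀
  have hupper := relEntropy_mixture_perturb_le hP hπ hmax θ₀ ht
  rw [mixture_perturb_apply, hy₀, mul_zero, zero_add, div_mul_cancel_right₀ hc.ne',
    Real.log_inv] at hlower
  linarith

lemma relEntropy_mixture_le_of_isMaxOn (θ₀ : Θ) :
    relEntropy (P θ₀) (mixture P π) ≤ mutualInfo P π := by
  classical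
  have hcont := (continuousAt_relEntropy (q := mixture P π) fun y hy =>
    eq_zero_of_mixture_eq_zero_of_isMaxOn hP hπ hmax θ₀ hy).comp_of_eq
      (f := fun t : ℝ => mixture P ((1 - t) • π + t • Pi.single θ₀ 1)) (x := 0)
      (continuous_mixture.comp (by fun_prop)).continuousAt (by simp)
  have hlim := le_of_tendsto (hcont.tendsto.mono_left (nhdsWithin_le_nhds (s := Set.Ioi 0)))
    (eventually_of_mem (Ioo_mem_nhdsGT one_pos) fun t ht =>
      relEntropy_mixture_perturb_le hP hπ hmax θ₀ ht)
  simpa using hlim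

end IsMaxOn

noncomputable def expectedKL (P : Θ → Y → ℝ) (π : Θ → ℝ) (q : Y → ℝ) : ℝ≥0∞ :=
  ∑ θ, ENNReal.ofReal (π θ) * finKL (P θ) q

lemma finKL_eq_ofReal_relEntropy {p q : Y → ℝ} (hpq : ∀ y, q y = 0 → p y = 0) :
    finKL p q = ENNReal.ofReal (relEntropy p q) :=
  if_pos hpq

lemma expectedKL_eq_ofReal {q : Y → ℝ} (hP : ∀ θ, P θ ∈ stdSimplex ℝ Y) (hπ : ∀ θ, 0 ≤ π θ)
    (hq : q ∈ stdSimplex ℝ Y) (hac : ∀ θ, π θ ≠ 0 → ∀ y, q y = 0 → P θ y = 0) :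
    expectedKL P π q = ENNReal.ofReal (∑ θ, π θ * relEntropy (P θ) q) := by
  have hterm : ∀ θ, 0 ≤ π θ * relEntropy (P θ) q ∧
      ENNReal.ofReal (π θ) * finKL (P θ) q = ENNReal.ofReal (π θ * relEntropy (P θ) q) := by
    intro θ
    by_cases hθ : π θ = 0
    · simp [hθ]
    · rw [finKL_eq_ofReal_relEntropy (hac θ hθ), ENNReal.ofReal_mul (hπ θ)]
      exact ⟨mul_nonneg (hπ θ) (relEntropy_nonneg (hP θ) hq (hac θ hθ)), rfl⟩
  rw [ENNReal.ofReal_sum_of_nonneg fun θ _ => (hterm θ).1]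
  exact sum_congr rfl fun θ _ => (hterm θ).2

lemma expectedKL_mixture (hP : ∀ θ, P θ ∈ stdSimplex ℝ Y) (hπ : π ∈ stdSimplex ℝ Θ) :
    expectedKL P π (mixture P π) = ENNReal.ofReal (mutualInfo P π) :=
  expectedKL_eq_ofReal hP hπ.1 (mixture_mem_stdSimplex hP hπ)
    fun _ hθ _ hy => eq_zero_of_mixture_eq_zero (fun θ => (hP θ).1) hπ.1 hθ hy

lemma ofReal_mutualInfo_le_expectedKL {q : Y → ℝ} (hP : ∀ θ, P θ ∈ stdSimplex ℝ Y)
    (hπ : π ∈ stdSimplex ℝ Θ) (hq : q ∈ stdSimplex ℝ Y) :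
    ENNReal.ofReal (mutualInfo P π) ≤ expectedKL P π q := by
  by_cases hac : ∀ θ, π θ ≠ 0 → ∀ y, q y = 0 → P θ y = 0
  · rw [expectedKL_eq_ofReal hP hπ.1 hq hac]
    refine ENNReal.ofReal_le_ofReal (mutualInfo_le_sum_mul_relEntropy hP hπ hq fun y hy => ?_)
    refine sum_eq_zero fun θ _ => ?_
    by_cases hθ : π θ = 0
    · simp [hθ]
    · simp [hac θ hθ y hy]
  · push Not at hac
    obtain ⟨θ, hθ, y, hy, hPy⟩ := hac
    have htop : finKL (P θ) q = ⊤ := if_neg fun h => hPy (h y hy)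
    have hpos : ENNReal.ofReal (π θ) ≠ 0 := by
      simpa using (hπ.1 θ).lt_of_ne' hθ
    rw [expectedKL, ENNReal.sum_eq_top.mpr ⟨θ, mem_univ θ, by rw [htop, ENNReal.mul_top hpos]⟩]
    exact le_top

lemma expectedKL_mixture_le_of_isMaxOn {πs : Θ → ℝ} (hP : ∀ θ, P θ ∈ stdSimplex ℝ Y)
    (hπs : πs ∈ stdSimplex ℝ Θ) (hmax : IsMaxOn (mutualInfo P) (stdSimplex ℝ Θ) πs)
    (hπ : π ∈ stdSimplex ℝ Θ) :
    expectedKL P π (mixture P πs) ≤ ENNReal.ofReal (mutualInfo P πs) := by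
  have hθ : ∀ θ, finKL (P θ) (mixture P πs) ≤ ENNReal.ofReal (mutualInfo P πs) := fun θ => by
    rw [finKL_eq_ofReal_relEntropy fun y hy =>
      eq_zero_of_mixture_eq_zero_of_isMaxOn hP hπs hmax θ hy]
    exact ENNReal.ofReal_le_ofReal (relEntropy_mixture_le_of_isMaxOn hP hπs hmax θ)
  calc expectedKL P π (mixture P πs)
      ≤ ∑ θ, ENNReal.ofReal (π θ) * ENNReal.ofReal (mutualInfo P πs) := by
        unfold expectedKL
        gcongr with θ
        exact hθ θ
    _ = ENNReal.ofReal (mutualInfo P πs) := by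
        rw [← sum_mul, ← ENNReal.ofReal_sum_of_nonneg fun θ _ => hπ.1 θ, hπ.2,
          ENNReal.ofReal_one, one_mul]

end RelEntropy

/-- Minimax equals maximin for expected relative entropy (finite case):
`⨅_Q ⨆_π ∑_θ π(θ) D(P_θ‖Q) = ⨆_π ⨅_Q ∑_θ π(θ) D(P_θ‖Q) = ⨆_π I_π(θ;Y)`,
and the mixture under any capacity-attaining prior is a minimax `Q`. -/
theorem minimax_eq_maximin_relEntropy {Θ Y : Type*} [Fintype Θ] [Fintype Y]
    [Nonempty Θ]
    (P : Θ → Y → ℝ) (hP0 : ∀ θ y, 0 ≤ P θ y) (hP1 : ∀ θ, ∑ y, P θ y = 1) :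
    letI Prior := {π : Θ → ℝ // (∀ θ, 0 ≤ π θ) ∧ ∑ θ, π θ = 1}
    letI Dist := {q : Y → ℝ // (∀ y, 0 ≤ q y) ∧ ∑ y, q y = 1}
    letI pay : Prior → Dist → ℝ≥0∞ :=
      fun π q => ∑ θ, ENNReal.ofReal (π.1 θ) * finKL (P θ) q.1
    letI mix : Prior → Dist := fun π =>
      ⟨fun y => ∑ θ, π.1 θ * P θ y,
        fun y => Finset.sum_nonneg fun θ _ =>
          mul_nonneg (π.2.1 θ) (hP0 θ y),
        by
          rw [Finset.sum_comm]
          simp [← Finset.mul_sum, hP1, π.2.2]⟩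
    letI I : Prior → ℝ≥0∞ := fun π => pay π (mix π)
    (⨅ q, ⨆ π, pay π q) = (⨆ π, ⨅ q, pay π q) ∧
      (⨆ π, ⨅ q, pay π q) = (⨆ π, I π) ∧
      ∀ πs : Prior, I πs = (⨆ π, I π) →
        (⨆ π, pay π (mix πs)) = ⨅ q, ⨆ π, pay π q := by
  have hP : ∀ θ, P θ ∈ stdSimplex ℝ Y := fun θ => ⟨hP0 θ, hP1 θ⟩
  refine iInf_iSup_eq_iSup_iInf_of_bestResponse _ _ (fun π q => ?_) ?_ fun πs hπs π => ?_
  · exact (expectedKL_mixture hP π.2).trans_le (ofReal_mutualInfo_le_expectedKL hP π.2 q.2)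
  · obtain ⟨π₀, hπ₀, hmax⟩ := exists_isMaxOn_mutualInfo hP0
    refine ⟨⟨π₀, hπ₀⟩, fun π => ?_⟩
    exact (expectedKL_mixture hP π.2).trans_le <| (ENNReal.ofReal_le_ofReal (hmax π.2)).trans_eq
      (expectedKL_mixture hP hπ₀).symm
  · have hmax : IsMaxOn (mutualInfo P) (stdSimplex ℝ Θ) πs.1 := fun π hπ =>
      (ENNReal.ofReal_le_ofReal_iff (mutualInfo_nonneg hP πs.2)).mp <|
        (expectedKL_mixture hP hπ).symm.trans_le <| (hπs ⟨π, hπ⟩).trans_eq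
          (expectedKL_mixture hP πs.2)
    exact (expectedKL_mixture_le_of_isMaxOn hP πs.2 hmax π.2).trans_eq
      (expectedKL_mixture hP πs.2).symm
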